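/- The quantity l(λ,μ) = Σ_{i ∈ I(B)} l_i(λ,μ) is a finite sum (only finitely many l_i(λ,μ) are nonzero), and λ ≥ μ in the diagram order if and only if l_i(λ,μ) ≥ 0 for all i ∈ I(B). -/

import Mathlib

/-- The four labels `∘, ×, ∨, ∧`. -/
inductive Lbl : Type
  | circ | times | vee | wedge
  deriving DecidableEq

/-- A label is trivial if it is `∘` or `×`. -/
def Triv (s : Lbl) : Prop := s = Lbl.circ ∨ s = Lbl.times

/-- One covering move: `d'` is obtained from `d` by swapping a `∨` and a `∧`
so that the `∧` moves to the right. -/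
def Step (d d' : ℕ → Lbl) : Prop :=
  ∃ i j : ℕ, i < j ∧ d i = Lbl.wedge ∧ d j = Lbl.vee ∧
    d' i = Lbl.vee ∧ d' j = Lbl.wedge ∧ ∀ n, n ≠ i → n ≠ j → d' n = d n

/-- The diagram order, generated by the swapping moves. -/
def DiagLe (d d' : ℕ → Lbl) : Prop := Relation.ReflTransGen Step d d'

/-- The set of non-trivial vertices (those labelled `∨` or `∧`). -/
def NonTriv (d : ℕ → Lbl) : Set ℕ := {i | ¬ Triv (d i)}

/-- `I(B)`: the non-trivial vertices, excluding the leftmost one. -/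
noncomputable def IB (d : ℕ → Lbl) : Set ℕ := NonTriv d \ {sInf (NonTriv d)}

/-- `l_i(λ,μ)`. -/
noncomputable def lI (dl dm : ℕ → Lbl) (i : ℕ) : ℤ :=
  ({j | i ≤ j ∧ dl j ≠ dm j ∧ j ∈ IB dl ∧ dl j = Lbl.wedge}.ncard : ℤ) -
  ({j | i ≤ j ∧ dl j ≠ dm j ∧ j ∈ IB dl ∧ dm j = Lbl.wedge}.ncard : ℤ)

/-!
Let `A` (resp. `B`) be the set of vertices where `λ` carries `∧` and `μ` carries `∨` (resp. the
other way round); for `i ∈ I(B)` one has `l_i(λ,μ) = #(A ∩ [i,∞)) - #(B ∩ [i,∞))`. A swapping move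
only pushes a `∧` to the right, so the number of `∧` in each tail `[k,∞)` grows along the diagram
order; comparing `μ` with `λ` this is `#(B ∩ [k,∞)) ≤ #(A ∩ [k,∞))`. Conversely, under these
inequalities and `#A = #B`, the rightmost vertex of `B` lies left of the rightmost vertex of `A`,
and swapping the labels of `μ` there is a move that shrinks `A` and `B` by one vertex each, so
induction gives `μ ≤ λ`. Finally, tails only change at non-trivial vertices, and the tail at the
leftmost one is all of `A` and `B`, so it suffices to test `k ∈ I(B)`.
-/

open Set

def wedgeSet (d : ℕ → Lbl) : Set ℕ := {n | d n = Lbl.wedge}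

def SameUpToVeeWedge (d d' : ℕ → Lbl) : Prop :=
  ∀ n, d n ≠ d' n → d n = Lbl.wedge ∧ d' n = Lbl.vee ∨ d n = Lbl.vee ∧ d' n = Lbl.wedge

section TailCount

theorem ncard_inter_Ici_le_ncard_insert_sdiff_inter_Ici {α : Type*} [Preorder α] {S : Set α}
    {i j : α} (hij : i ≤ j) (hj : j ∉ S) (k : α) :
    (S ∩ Ici k).ncard ≤ (insert j (S \ {i}) ∩ Ici k).ncard := by
  classical
  rcases (insert j (S \ {i}) ∩ Ici k).finite_or_infinite with hT | hT
  · refine ncard_le_ncard_of_injOn (Equiv.swap i j) ?_ (Equiv.injective _).injOn hT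
    rintro x ⟨hxS, hkx⟩
    by_cases hxi : x = i
    · subst hxi
      exact ⟨by simp, by simpa using hkx.trans hij⟩
    · rw [Equiv.swap_apply_of_ne_of_ne hxi (ne_of_mem_of_not_mem hxS hj)]
      exact ⟨mem_insert_of_mem _ ⟨hxS, hxi⟩, hkx⟩
  · have hS : (S ∩ Ici k).Infinite := fun hS => hT <| (hS.insert j).subset <| by
      rintro x ⟨rfl | ⟨hxS, -⟩, hkx⟩
      exacts [mem_insert _ _, mem_insert_of_mem _ ⟨hxS, hkx⟩]
    rw [hS.ncard]
    exact Nat.zero_le _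

variable {α : Type*} [LinearOrder α] {A B : Set α} {i j : α}

theorem exists_gt_of_ncard_inter_Ici_le (hB : B.Finite) (hAB : Disjoint A B) (hi : i ∈ B)
    (htail : (B ∩ Ici i).ncard ≤ (A ∩ Ici i).ncard) : ∃ a ∈ A, i < a := by
  have hBi : 0 < (B ∩ Ici i).ncard := (ncard_pos (hB.inter_of_left _)).2 ⟨i, hi, le_rfl⟩
  obtain ⟨a, ha, hia⟩ := nonempty_of_ncard_ne_zero (hBi.trans_le htail).ne'
  exact ⟨a, ha, hia.lt_of_ne (hAB.ne_of_mem ha hi).symm⟩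

theorem ncard_sdiff_inter_Ici_le (htail : ∀ k, (B ∩ Ici k).ncard ≤ (A ∩ Ici k).ncard)
    (hi : i ∈ B) (hmax : ∀ b ∈ B, b ≤ i) (hj : j ∈ A) (hij : i ≤ j) (k : α) :
    ((B \ {i}) ∩ Ici k).ncard ≤ ((A \ {j}) ∩ Ici k).ncard := by
  by_cases hki : k ≤ i
  · rw [sdiff_inter_right_comm, sdiff_inter_right_comm,
      ncard_sdiff_singleton_of_mem (s := B ∩ Ici k) ⟨hi, hki⟩,
      ncard_sdiff_singleton_of_mem (s := A ∩ Ici k) ⟨hj, hki.trans hij⟩]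
    exact Nat.sub_le_sub_right (htail k) 1
  · have hempty : (B \ {i}) ∩ Ici k = ∅ :=
      eq_empty_of_forall_notMem fun b ⟨⟨hb, _⟩, hkb⟩ => hki (le_trans hkb (hmax b hb))
    simp [hempty]

theorem exists_mem_inter_Ici_eq {S : Set ℕ} {k : ℕ} (hS : (S ∩ Ici k).Nonempty) :
    ∃ i ∈ S, ∀ A ⊆ S, A ∩ Ici k = A ∩ Ici i := by
  have hi := Nat.sInf_mem hS
  refine ⟨_, hi.1, fun A hA => ?_⟩
  ext x
  exact and_congr_right fun hx =>
    ⟨fun hkx => Nat.sInf_le ⟨hA hx, hkx⟩, fun hix => mem_Ici.2 (le_trans hi.2 hix)⟩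

end TailCount

namespace SameUpToVeeWedge

variable {d d' : ℕ → Lbl}

theorem of_triv (h : ∀ n, Triv (d n) → d' n = d n) (h' : ∀ n, Triv (d' n) → d n = d' n) :
    SameUpToVeeWedge d d' := by
  intro n hne
  have h := mt (h n) (Ne.symm hne)
  have h' := mt (h' n) hne
  cases hd : d n <;> cases hd' : d' n <;> simp_all [Triv]

theorem symm (h : SameUpToVeeWedge d d') : SameUpToVeeWedge d' d :=
  fun n hne => (h n (Ne.symm hne)).symm.imp And.symm And.symm

theorem not_triv (h : SameUpToVeeWedge d d') {n : ℕ} (hne : d n ≠ d' n) : ¬ Triv (d n) := by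
  rcases h n hne with ⟨hd, -⟩ | ⟨hd, -⟩ <;> simp [Triv, hd]

theorem wedgeSet_sdiff (h : SameUpToVeeWedge d d') :
    wedgeSet d \ wedgeSet d' = {n | d n = Lbl.wedge ∧ d' n = Lbl.vee} := by
  ext n
  refine ⟨fun ⟨hd, hd'⟩ => ?_, fun ⟨hd, hd'⟩ => ⟨hd, by simp [wedgeSet, hd']⟩⟩
  have hd : d n = Lbl.wedge := hd
  have hne : d n ≠ d' n := fun heq => hd' (show d' n = Lbl.wedge from heq ▸ hd)
  simpa [hd] using h n hne

theorem wedgeSet_sdiff' (h : SameUpToVeeWedge d d') :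
    wedgeSet d' \ wedgeSet d = {n | d n = Lbl.vee ∧ d' n = Lbl.wedge} :=
  h.symm.wedgeSet_sdiff.trans (Set.ext fun _ => and_comm)

theorem piecewise (h : SameUpToVeeWedge d d') (s : Set ℕ) [DecidablePred (· ∈ s)] :
    SameUpToVeeWedge d (s.piecewise d d') := by
  intro n hne
  by_cases hs : n ∈ s
  · exact absurd (piecewise_eq_of_mem _ _ _ hs).symm hne
  · rw [piecewise_eq_of_notMem _ _ _ hs] at hne ⊢
    exact h n hne

end SameUpToVeeWedge

theorem wedgeSet_sdiff_piecewise (d d' : ℕ → Lbl) (s : Set ℕ) [DecidablePred (· ∈ s)] :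
    wedgeSet d \ wedgeSet (s.piecewise d d') = (wedgeSet d \ wedgeSet d') \ s := by
  ext n
  by_cases hs : n ∈ s <;> simp [wedgeSet, hs]

theorem wedgeSet_piecewise_sdiff (d d' : ℕ → Lbl) (s : Set ℕ) [DecidablePred (· ∈ s)] :
    wedgeSet (s.piecewise d d') \ wedgeSet d = (wedgeSet d' \ wedgeSet d) \ s := by
  ext n
  by_cases hs : n ∈ s <;> simp [wedgeSet, hs]

theorem Step.wedgeSet_eq {d d' : ℕ → Lbl} (h : Step d d') :
    ∃ i j, i < j ∧ j ∉ wedgeSet d ∧ wedgeSet d' = insert j (wedgeSet d \ {i}) := by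
  obtain ⟨i, j, hij, hdi, hdj, hdi', hdj', hd'⟩ := h
  refine ⟨i, j, hij, by simp [wedgeSet, hdj], ?_⟩
  ext n
  rcases eq_or_ne n i with rfl | hni
  · simp [wedgeSet, hdi', hij.ne]
  rcases eq_or_ne n j with rfl | hnj
  · simp [wedgeSet, hdj']
  · simp [wedgeSet, hd' n hni hnj, hni, hnj]

theorem DiagLe.ncard_wedgeSet_inter_Ici_le {d d' : ℕ → Lbl} (h : DiagLe d d') (k : ℕ) :
    (wedgeSet d ∩ Ici k).ncard ≤ (wedgeSet d' ∩ Ici k).ncard := by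
  induction h with
  | refl => exact le_rfl
  | tail _ hstep ih =>
    obtain ⟨i, j, hij, hj, hW⟩ := hstep.wedgeSet_eq
    exact ih.trans (hW ▸ ncard_inter_Ici_le_ncard_insert_sdiff_inter_Ici hij.le hj k)

theorem step_piecewise_pair {dl dm : ℕ → Lbl} {i j : ℕ} (hij : i < j)
    (hi : dl i = Lbl.vee ∧ dm i = Lbl.wedge) (hj : dl j = Lbl.wedge ∧ dm j = Lbl.vee) :
    Step dm (({i, j} : Set ℕ).piecewise dl dm) := by
  refine ⟨i, j, hij, hi.2, hj.2, ?_, ?_, fun m hmi hmj => ?_⟩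
  · simp [hi.1]
  · simp [hj.1]
  · simp [hmi, hmj]

theorem diagLe_of_forall_ncard_inter_Ici_le {dl dm : ℕ → Lbl} (h : SameUpToVeeWedge dl dm)
    (hA : (wedgeSet dl \ wedgeSet dm).Finite) (hB : (wedgeSet dm \ wedgeSet dl).Finite)
    (hcard : (wedgeSet dl \ wedgeSet dm).ncard = (wedgeSet dm \ wedgeSet dl).ncard)
    (htail : ∀ k, ((wedgeSet dm \ wedgeSet dl) ∩ Ici k).ncard
      ≤ ((wedgeSet dl \ wedgeSet dm) ∩ Ici k).ncard) :
    DiagLe dm dl := by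
  induction hn : (wedgeSet dm \ wedgeSet dl).ncard generalizing dm with
  | zero =>
    have hA0 := (ncard_eq_zero hA).1 (hcard.trans hn)
    have hB0 := (ncard_eq_zero hB).1 hn
    rw [h.wedgeSet_sdiff] at hA0
    rw [h.wedgeSet_sdiff'] at hB0
    obtain rfl : dm = dl := funext fun n => by_contra fun hne => by
      rcases h n (Ne.symm hne) with hdiff | hdiff
      exacts [hA0.subset hdiff, hB0.subset hdiff]
    exact .refl
  | succ n ih =>
    obtain ⟨i, hiB, himax⟩ := exists_max_image _ id hB (nonempty_of_ncard_ne_zero (by omega))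
    obtain ⟨a, haA, hia⟩ :=
      exists_gt_of_ncard_inter_Ici_le hB disjoint_sdiff_sdiff hiB (htail i)
    obtain ⟨j, hjA, hjmax⟩ := exists_max_image _ id hA ⟨a, haA⟩
    have hij : i < j := hia.trans_le (hjmax a haA)
    set dm' := ({i, j} : Set ℕ).piecewise dl dm
    have hstep : Step dm dm' :=
      step_piecewise_pair hij (h.wedgeSet_sdiff'.subset hiB) (h.wedgeSet_sdiff.subset hjA)
    have hA' : wedgeSet dl \ wedgeSet dm' = (wedgeSet dl \ wedgeSet dm) \ {j} := by
      rw [wedgeSet_sdiff_piecewise,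
        sdiff_insert_of_notMem (disjoint_sdiff_sdiff.notMem_of_mem_right hiB)]
    have hB' : wedgeSet dm' \ wedgeSet dl = (wedgeSet dm \ wedgeSet dl) \ {i} := by
      rw [wedgeSet_piecewise_sdiff, pair_comm,
        sdiff_insert_of_notMem (disjoint_sdiff_sdiff.notMem_of_mem_left hjA)]
    refine .head hstep (ih (h.piecewise _) (hA' ▸ hA.sdiff) (hB' ▸ hB.sdiff) ?_ ?_ ?_)
    · rw [hA', hB', ncard_sdiff_singleton_of_mem hjA, ncard_sdiff_singleton_of_mem hiB, hcard]
    · rw [hA', hB']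
      exact ncard_sdiff_inter_Ici_le htail hiB himax hjA hij.le
    · rw [hB', ncard_sdiff_singleton_of_mem hiB, hn, Nat.add_sub_cancel]

theorem diagLe_iff_forall_ncard_inter_Ici_le {dl dm : ℕ → Lbl} (h : SameUpToVeeWedge dl dm)
    (hl : (wedgeSet dl).Finite) (hm : (wedgeSet dm).Finite)
    (hcard : (wedgeSet dl \ wedgeSet dm).ncard = (wedgeSet dm \ wedgeSet dl).ncard) :
    DiagLe dm dl ↔ ∀ k, ((wedgeSet dm \ wedgeSet dl) ∩ Ici k).ncard
      ≤ ((wedgeSet dl \ wedgeSet dm) ∩ Ici k).ncard := by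
  refine ⟨fun hle k => ?_, diagLe_of_forall_ncard_inter_Ici_le h hl.sdiff hm.sdiff hcard⟩
  rw [inter_sdiff_distrib_right, inter_sdiff_distrib_right,
    ← ncard_le_ncard_iff_ncard_sdiff_le_ncard_sdiff (hm.inter_of_left _) (hl.inter_of_left _)]
  exact hle.ncard_wedgeSet_inter_Ici_le k

theorem lI_eq_zero_of_forall_lt {dl dm : ℕ → Lbl} {i : ℕ}
    (h : ∀ j, dl j ≠ dm j → j < i) : lI dl dm i = 0 := by
  have hempty (P : ℕ → Prop) : {j | i ≤ j ∧ dl j ≠ dm j ∧ P j} = ∅ :=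
    eq_empty_of_forall_notMem fun j ⟨hij, hne, _⟩ => (h j hne).not_ge hij
  simp only [lI, hempty, ncard_empty, sub_self]

theorem lI_eq_of_mem_IB {dl dm : ℕ → Lbl} (h : SameUpToVeeWedge dl dm) {i : ℕ}
    (hi : i ∈ IB dl) :
    lI dl dm i = ((wedgeSet dl \ wedgeSet dm) ∩ Ici i).ncard
      - ((wedgeSet dm \ wedgeSet dl) ∩ Ici i).ncard := by
  have hIB {j : ℕ} (hij : i ≤ j) (hne : dl j ≠ dm j) : j ∈ IB dl :=
    ⟨h.not_triv hne, ((Nat.sInf_le hi.1).lt_of_ne (Ne.symm hi.2)).trans_le hij |>.ne'⟩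
  have hW {d d' : ℕ → Lbl} (hdd : ∀ j, d j ≠ d' j ↔ dl j ≠ dm j) :
      {j | i ≤ j ∧ dl j ≠ dm j ∧ j ∈ IB dl ∧ d j = Lbl.wedge}
        = (wedgeSet d \ wedgeSet d') ∩ Ici i := by
    ext j
    refine ⟨fun ⟨hij, hne, _, hw⟩ =>
      ⟨⟨hw, fun hw' => (hdd j).2 hne (hw.trans hw'.symm)⟩, hij⟩,
      fun ⟨⟨hw, hw'⟩, hij⟩ => ?_⟩
    have hne : dl j ≠ dm j := (hdd j).1 fun heq => hw' (show d' j = Lbl.wedge from heq ▸ hw)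
    exact ⟨hij, hne, hIB hij hne, hw⟩
  rw [lI, hW fun _ => Iff.rfl, hW fun _ => ne_comm]

theorem ncard_inter_Ici_le_of_lI_nonneg {dl dm : ℕ → Lbl} (h : SameUpToVeeWedge dl dm)
    (hcard : (wedgeSet dl \ wedgeSet dm).ncard = (wedgeSet dm \ wedgeSet dl).ncard)
    (hlI : ∀ i ∈ IB dl, 0 ≤ lI dl dm i) (k : ℕ) :
    ((wedgeSet dm \ wedgeSet dl) ∩ Ici k).ncard
      ≤ ((wedgeSet dl \ wedgeSet dm) ∩ Ici k).ncard := by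
  have hA : wedgeSet dl \ wedgeSet dm ⊆ NonTriv dl := fun n hn =>
    h.not_triv fun heq => hn.2 (show dm n = Lbl.wedge from heq ▸ hn.1)
  have hB : wedgeSet dm \ wedgeSet dl ⊆ NonTriv dl := fun n hn =>
    h.not_triv fun heq => hn.2 (show dl n = Lbl.wedge from heq ▸ hn.1)
  rcases (NonTriv dl ∩ Ici k).eq_empty_or_nonempty with hk | hk
  · have hBk : (wedgeSet dm \ wedgeSet dl) ∩ Ici k = ∅ :=
      subset_empty_iff.1 (hk ▸ inter_subset_inter_left _ hB)
    simp [hBk]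
  obtain ⟨i, hi, htails⟩ := exists_mem_inter_Ici_eq hk
  rw [htails _ hA, htails _ hB]
  rcases eq_or_ne i (sInf (NonTriv dl)) with rfl | hne
  · rw [inter_eq_left.2 fun n hn => mem_Ici.2 (Nat.sInf_le (hA hn)),
      inter_eq_left.2 fun n hn => mem_Ici.2 (Nat.sInf_le (hB hn))]
    exact hcard.ge
  · have := hlI i ⟨hi, hne⟩
    rw [lI_eq_of_mem_IB h ⟨hi, hne⟩] at this
    omega

theorem lSum_finite_and_order_iff_general (dl dm : ℕ → Lbl)
    (hbdd : ∃ N : ℕ, ∀ n, N ≤ n → dl n = Lbl.vee)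
    (hblock : (∀ n, Triv (dl n) → dm n = dl n) ∧ (∀ n, Triv (dm n) → dl n = dm n) ∧
      {n | dl n ≠ dm n}.Finite ∧
      {n | dl n = Lbl.wedge ∧ dm n = Lbl.vee}.ncard
        = {n | dl n = Lbl.vee ∧ dm n = Lbl.wedge}.ncard) :
    {i ∈ IB dl | lI dl dm i ≠ 0}.Finite ∧
      (DiagLe dm dl ↔ ∀ i ∈ IB dl, 0 ≤ lI dl dm i) := by
  obtain ⟨htriv, htriv', hfin, hcard⟩ := hblock
  have h := SameUpToVeeWedge.of_triv htriv htriv'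
  rw [← h.wedgeSet_sdiff, ← h.wedgeSet_sdiff'] at hcard
  obtain ⟨N, hN⟩ := hbdd
  have hl : (wedgeSet dl).Finite := (finite_Iio N).subset fun n hn =>
    mem_Iio.2 <| not_le.1 fun hNn => by simp [wedgeSet, hN n hNn] at hn
  have hm : (wedgeSet dm).Finite := (hl.union hfin).subset fun n hn =>
    (eq_or_ne (dl n) (dm n)).imp (fun heq => show dl n = Lbl.wedge from heq.trans hn) id
  obtain ⟨M, hM⟩ := hfin.bddAbove
  refine ⟨(finite_Iic M).subset fun i hi => not_lt.1 fun hMi =>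
    hi.2 (lI_eq_zero_of_forall_lt fun j hj => (hM hj).trans_lt hMi), ?_⟩
  rw [diagLe_iff_forall_ncard_inter_Ici_le h hl hm hcard]
  refine ⟨fun htail i hi => ?_, ncard_inter_Ici_le_of_lI_nonneg h hcard⟩
  rw [lI_eq_of_mem_IB h hi, sub_nonneg]
  exact_mod_cast htail i

/-- The sum `l(λ,μ) = Σ_{i ∈ I(B)} l_i(λ,μ)` has only finitely many nonzero
terms, and `λ ≥ μ` in the diagram order if and only if `l_i(λ,μ) ≥ 0` for all
`i ∈ I(B)`. -/
theorem lSum_finite_and_order_iff (dl dm : ℕ → Lbl)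
    (hbdd : ∃ N : ℕ, ∀ n, N ≤ n → dl n = Lbl.vee)
    (hblock : (∀ n, Triv (dl n) → dm n = dl n) ∧ (∀ n, Triv (dm n) → dl n = dm n) ∧
      {n | dl n ≠ dm n}.Finite ∧
      {n | dl n = Lbl.wedge ∧ dm n = Lbl.vee}.ncard
        = {n | dl n = Lbl.vee ∧ dm n = Lbl.wedge}.ncard)
    (hne : (NonTriv dl).Nonempty) :
    {i ∈ IB dl | lI dl dm i ≠ 0}.Finite ∧
      (DiagLe dm dl ↔ ∀ i ∈ IB dl, 0 ≤ lI dl dm i) :=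
  lSum_finite_and_order_iff_general dl dm hbdd hblock
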